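/- Let R be a ring with finite global dimension. Then the global dimension of R equals sup{ id_R(P) : P a projective R-module } and also equals sup{ pd_R(I) : I an injective R-module }. -/

import Mathlib

universe u

open CategoryTheory

variable (R : Type u) [Ring R]

/-- Resolutions `0 → P_n → ⋯ → P_0 → M → 0` of length `≤ n` by modules satisfying `pred`. -/
def ResBy (pred : ∀ (M : Type u) [AddCommGroup M] [Module R M], Prop) :
    ℕ → ∀ (M : Type u) [AddCommGroup M] [Module R M], Prop
  | 0, M, _, _ => pred M
  | (n+1), M, _, _ => ∃ (P : Type u) (_ : AddCommGroup P) (_ : Module R P)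
      (f : P →ₗ[R] M), pred P ∧ Function.Surjective f ∧
        ResBy pred n (LinearMap.ker f)

/-- `M` admits an exact sequence `0 → P_n → ⋯ → P_0 → M → 0`
with all `P_i` finitely generated projective, i.e. `M ∈ 𝒫^{<n+1}`. -/
def FPRes (n : ℕ) (M : Type u) [AddCommGroup M] [Module R M] : Prop :=
  ResBy R (fun P _ _ => Module.Finite R P ∧ Module.Projective R P) n M

/-- `M` has projective dimension at most `n`. -/
def pdLE (n : ℕ) (M : Type u) [AddCommGroup M] [Module R M] : Prop :=
  ResBy R (fun P _ _ => Module.Projective R P) n M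

/-- Coresolutions `0 → M → I^0 → ⋯ → I^n → 0` of length `≤ n` by modules satisfying `pred`. -/
def CoresBy (pred : ∀ (M : Type u) [AddCommGroup M] [Module R M], Prop) :
    ℕ → ∀ (M : Type u) [AddCommGroup M] [Module R M], Prop
  | 0, M, _, _ => pred M
  | (n+1), M, _, _ => ∃ (I : Type u) (_ : AddCommGroup I) (_ : Module R I)
      (f : M →ₗ[R] I), pred I ∧ Function.Injective f ∧
        CoresBy pred n (I ⧸ LinearMap.range f)

/-- `M` has injective dimension at most `n`. -/
def idLE (n : ℕ) (M : Type u) [AddCommGroup M] [Module R M] : Prop :=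
  CoresBy R (fun I _ _ => Module.Injective R I) n M

/-- The projective dimension of `M`, as an element of `ℕ∞`. -/
noncomputable def pdim (M : Type u) [AddCommGroup M] [Module R M] : ℕ∞ :=
  sInf ((↑) '' {n : ℕ | pdLE R n M})

/-- The injective dimension of `M`, as an element of `ℕ∞`. -/
noncomputable def idim (M : Type u) [AddCommGroup M] [Module R M] : ℕ∞ :=
  sInf ((↑) '' {n : ℕ | idLE R n M})

/-- A short exact sequence `0 → A → B → C → 0` (given by `f`, `g`) is `n`-exact if
`Hom_R(M, -)` keeps it exact for every `M ∈ 𝒫^{<n+1}`. -/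
def NExactSES (n : ℕ) {A B C : Type u} [AddCommGroup A] [Module R A]
    [AddCommGroup B] [Module R B] [AddCommGroup C] [Module R C]
    (f : A →ₗ[R] B) (g : B →ₗ[R] C) : Prop :=
  ∀ (M : Type u) [AddCommGroup M] [Module R M], FPRes R n M →
    Function.Injective (fun h : M →ₗ[R] A => f.comp h) ∧
    Function.Exact (fun h : M →ₗ[R] A => f.comp h) (fun h : M →ₗ[R] B => g.comp h) ∧
    Function.Surjective (fun h : M →ₗ[R] B => g.comp h)

/-- `Q` is `n`-projective if `Hom_R(Q, -)` keeps every `n`-exact short exact sequence exact. -/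
def NProj (n : ℕ) (Q : Type u) [AddCommGroup Q] [Module R Q] : Prop :=
  ∀ (A B C : Type u) [AddCommGroup A] [Module R A] [AddCommGroup B] [Module R B]
    [AddCommGroup C] [Module R C] (f : A →ₗ[R] B) (g : B →ₗ[R] C),
    Function.Injective f → Function.Surjective g → Function.Exact f g →
    NExactSES R n f g →
    Function.Injective (fun h : Q →ₗ[R] A => f.comp h) ∧
    Function.Exact (fun h : Q →ₗ[R] A => f.comp h) (fun h : Q →ₗ[R] B => g.comp h) ∧
    Function.Surjective (fun h : Q →ₗ[R] B => g.comp h)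

/-- `Ext^k_R(M, N)` as an abelian group (computed in `ModuleCat R`). -/
noncomputable def ExtGrp (k : ℕ) (M N : Type u) [AddCommGroup M] [Module R M]
    [AddCommGroup N] [Module R N] : Type u :=
  ((Ext ℤ (ModuleCat.{u} R) k).obj (Opposite.op (ModuleCat.of R M))).obj (ModuleCat.of R N)

/-! The resolution-style dimensions `pdLE`, `idLE` obey the same dimension shifting along
`0 → K → F → M → 0` (`F` free) and `0 → M → E → E ⧸ M → 0` (`E` injective) as Mathlib's
`Ext`-based `HasProjectiveDimensionLE`, `HasInjectiveDimensionLE`, so the two notions agree.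
In the `Ext` picture, "every object has `pd < n`" and "every object has `id < n`" both say that
`Ext^i` vanishes for all `i ≥ n`. If moreover every projective has `id < n`, a sequence
`0 → K → P → X → 0` with `P` projective gives `id X < m` as soon as `id K < m + 1` and `n ≤ m`,
so the uniform bound on injective dimensions, finite by assumption, descends step by step to `n`.
Dually for injectives and projective dimension, along `0 → X → I → I ⧸ X → 0`. -/

open CategoryTheory Abelian Limits

namespace CategoryTheory

variable {C : Type*} [Category C] [Abelian C]

theorem forall_hasProjectiveDimensionLT_iff_forall_hasInjectiveDimensionLT (n : ℕ) :
    (∀ X : C, HasProjectiveDimensionLT X n) ↔ ∀ Y : C, HasInjectiveDimensionLT Y n := by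
  let := HasExt.standard C
  simp only [hasProjectiveDimensionLT_iff, hasInjectiveDimensionLT_iff]
  exact ⟨fun h Y i hi X e => h X i hi e, fun h X i hi Y e => h Y i hi e⟩

theorem hasInjectiveDimensionLT_of_forall_projective [EnoughProjectives C] {n d : ℕ}
    (hP : ∀ P : C, Projective P → HasInjectiveDimensionLT P n)
    (hd : ∀ X : C, HasInjectiveDimensionLT X d) (X : C) : HasInjectiveDimensionLT X n := by
  suffices ∀ k, (∀ X : C, HasInjectiveDimensionLT X (n + k)) → HasInjectiveDimensionLT X n from
    this d fun X => hasInjectiveDimensionLT_of_ge X d (n + d) (by omega)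
  intro k hk
  induction k with
  | zero => exact hk X
  | succ k ih =>
    refine ih fun Y => ?_
    obtain ⟨p⟩ := EnoughProjectives.presentation Y
    have hS : (ShortComplex.mk _ _ (kernel.condition p.f)).ShortExact :=
      { exact := ShortComplex.exact_kernel p.f }
    have := hP p.p p.projective
    exact hS.hasInjectiveDimensionLT_X₃ (n + k)
      (hasInjectiveDimensionLT_of_ge _ n _ (by omega)) (hk _)

theorem hasProjectiveDimensionLT_of_forall_injective [EnoughInjectives C] {n d : ℕ}
    (hI : ∀ I : C, Injective I → HasProjectiveDimensionLT I n)
    (hd : ∀ X : C, HasProjectiveDimensionLT X d) (X : C) : HasProjectiveDimensionLT X n := by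
  suffices ∀ k, (∀ X : C, HasProjectiveDimensionLT X (n + k)) → HasProjectiveDimensionLT X n from
    this d fun X => hasProjectiveDimensionLT_of_ge X d (n + d) (by omega)
  intro k hk
  induction k with
  | zero => exact hk X
  | succ k ih =>
    refine ih fun Y => ?_
    obtain ⟨p⟩ := EnoughInjectives.presentation Y
    have hS : (ShortComplex.mk _ _ (cokernel.condition p.f)).ShortExact :=
      { exact := ShortComplex.exact_cokernel p.f }
    have := hI p.J p.injective
    exact hS.hasProjectiveDimensionLT_X₁ (n + k)
      (hasProjectiveDimensionLT_of_ge _ n _ (by omega)) (hk _)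

theorem forall_hasProjectiveDimensionLT_iff_forall_projective [EnoughProjectives C] {d : ℕ}
    (hd : ∀ X : C, HasProjectiveDimensionLT X d) (n : ℕ) :
    (∀ X : C, HasProjectiveDimensionLT X n) ↔
      ∀ P : C, Projective P → HasInjectiveDimensionLT P n := by
  simp only [forall_hasProjectiveDimensionLT_iff_forall_hasInjectiveDimensionLT] at hd ⊢
  exact ⟨fun h P _ => h P, fun hP => hasInjectiveDimensionLT_of_forall_projective hP hd⟩

theorem forall_hasProjectiveDimensionLT_iff_forall_injective [EnoughInjectives C] {d : ℕ}
    (hd : ∀ X : C, HasProjectiveDimensionLT X d) (n : ℕ) :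
    (∀ X : C, HasProjectiveDimensionLT X n) ↔
      ∀ I : C, Injective I → HasProjectiveDimensionLT I n :=
  ⟨fun h I _ => h I, fun hI => hasProjectiveDimensionLT_of_forall_injective hI hd⟩

end CategoryTheory

theorem ENat.sInf_image_natCast_le_iff {p : ℕ → Prop} (hp : Monotone p) (n : ℕ) :
    sInf (((↑) : ℕ → ℕ∞) '' {m | p m}) ≤ n ↔ p n := by
  refine ⟨fun h => ?_, fun h => sInf_le ⟨n, h, rfl⟩⟩
  rw [← ENat.lt_add_one_iff (ENat.natCast_ne_top n), sInf_lt_iff] at h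
  obtain ⟨_, ⟨m, hm, rfl⟩, hmn⟩ := h
  exact hp (Nat.cast_le.1 ((ENat.lt_add_one_iff (ENat.natCast_ne_top n)).1 hmn)) hm

section

variable {R}

theorem pdLE_iff_hasProjectiveDimensionLE (n : ℕ) (M : Type u) [AddCommGroup M] [Module R M] :
    pdLE R n M ↔ HasProjectiveDimensionLE (ModuleCat.of R M) n := by
  induction n generalizing M with
  | zero =>
    exact (IsProjective.iff_projective M).trans (projective_iff_hasProjectiveDimensionLE_zero _)
  | succ n ih =>
    constructor
    · rintro ⟨P, _, _, f, hP, hf, hK⟩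
      have : Projective (ModuleCat.of R P) := (IsProjective.iff_projective P).1 hP
      exact ((LinearMap.shortExact_shortComplexKer hf).hasProjectiveDimensionLT_X₃_iff n
        inferInstance).2 ((ih _).1 hK)
    · intro h
      have hf := Finsupp.linearCombination_surjective R (Function.surjective_id (α := M))
      have : Projective (ModuleCat.of R (M →₀ R)) :=
        (IsProjective.iff_projective _).1 inferInstance
      exact ⟨M →₀ R, _, _, _, inferInstance, hf, (ih _).2
        (((LinearMap.shortExact_shortComplexKer hf).hasProjectiveDimensionLT_X₃_iff n
          inferInstance).1 h)⟩

theorem idLE_iff_hasInjectiveDimensionLE (n : ℕ) (M : Type u) [AddCommGroup M] [Module R M] :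
    idLE R n M ↔ HasInjectiveDimensionLE (ModuleCat.of R M) n := by
  induction n generalizing M with
  | zero =>
    exact (Module.injective_iff_injective_object R M).trans
      injective_iff_hasInjectiveDimensionLT_one
  | succ n ih =>
    constructor
    · rintro ⟨E, _, _, f, hE, hf, hQ⟩
      have : Injective (ModuleCat.of R E) := (Module.injective_iff_injective_object R E).1 hE
      have hS := ModuleCat.shortComplex_shortExact
        (ModuleCat.shortComplexOfCompEqZero _ _ f.exact_map_mkQ_range.linearMap_comp_eq_zero)
        f.exact_map_mkQ_range hf (Submodule.mkQ_surjective _)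
      exact (hS.hasInjectiveDimensionLT_X₃_iff n inferInstance).1 ((ih _).1 hQ)
    · intro h
      obtain ⟨E, _, f, _⟩ := EnoughInjectives.presentation (ModuleCat.of R M)
      have hf : Function.Injective f.hom := (ModuleCat.mono_iff_injective f).1 ‹_›
      have hS := ModuleCat.shortComplex_shortExact
        (ModuleCat.shortComplexOfCompEqZero _ _ f.hom.exact_map_mkQ_range.linearMap_comp_eq_zero)
        f.hom.exact_map_mkQ_range hf (Submodule.mkQ_surjective _)
      exact ⟨E, _, _, f.hom, Module.injective_module_of_injective_object R E, hf,
        (ih _).2 ((hS.hasInjectiveDimensionLT_X₃_iff n inferInstance).2 h)⟩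

theorem pdim_le_iff (n : ℕ) (M : Type u) [AddCommGroup M] [Module R M] :
    pdim R M ≤ n ↔ HasProjectiveDimensionLE (ModuleCat.of R M) n := by
  refine (ENat.sInf_image_natCast_le_iff (fun m k hmk hm => ?_) n).trans
    (pdLE_iff_hasProjectiveDimensionLE n M)
  have := (pdLE_iff_hasProjectiveDimensionLE m M).1 hm
  exact (pdLE_iff_hasProjectiveDimensionLE k M).2
    (hasProjectiveDimensionLT_of_ge _ (m + 1) (k + 1) (by omega))

theorem idim_le_iff (n : ℕ) (M : Type u) [AddCommGroup M] [Module R M] :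
    idim R M ≤ n ↔ HasInjectiveDimensionLE (ModuleCat.of R M) n := by
  refine (ENat.sInf_image_natCast_le_iff (fun m k hmk hm => ?_) n).trans
    (idLE_iff_hasInjectiveDimensionLE n M)
  have := (idLE_iff_hasInjectiveDimensionLE m M).1 hm
  exact (idLE_iff_hasInjectiveDimensionLE k M).2
    (hasInjectiveDimensionLT_of_ge _ (m + 1) (k + 1) (by omega))

end

/-- For a ring of finite global dimension, the global dimension equals the supremum of
injective dimensions of projectives, and the supremum of projective dimensions of injectives. -/
theorem gldim_eq_sup_id_proj_eq_sup_pd_inj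
    (hfin : ∃ d : ℕ, ∀ (M : Type u) [AddCommGroup M] [Module R M], pdLE R d M) :
    (⨆ M : ModuleCat.{u} R, pdim R M) =
      (⨆ P : {P : ModuleCat.{u} R // Module.Projective R P}, idim R P.1) ∧
    (⨆ M : ModuleCat.{u} R, pdim R M) =
      (⨆ I : {I : ModuleCat.{u} R // Module.Injective R I}, pdim R I.1) := by
  obtain ⟨d, hd⟩ := hfin
  have hgl (X : ModuleCat.{u} R) : HasProjectiveDimensionLE X d :=
    (pdLE_iff_hasProjectiveDimensionLE d X).1 (hd X)
  have hgldim (n : ℕ) : (⨆ M : ModuleCat.{u} R, pdim R M) ≤ n ↔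
      ∀ X : ModuleCat.{u} R, HasProjectiveDimensionLE X n := by
    simp only [iSup_le_iff, pdim_le_iff]
  constructor
  · refine WithTop.eq_of_forall_le_coe_iff fun n => show _ ≤ (n : ℕ∞) ↔ _ ≤ (n : ℕ∞) from ?_
    rw [hgldim, forall_hasProjectiveDimensionLT_iff_forall_projective hgl, iSup_le_iff,
      Subtype.forall]
    simp only [idim_le_iff, IsProjective.iff_projective]
  · refine WithTop.eq_of_forall_le_coe_iff fun n => show _ ≤ (n : ℕ∞) ↔ _ ≤ (n : ℕ∞) from ?_
    rw [hgldim, forall_hasProjectiveDimensionLT_iff_forall_injective hgl, iSup_le_iff,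
      Subtype.forall]
    simp only [pdim_le_iff, Module.injective_iff_injective_object]
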